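/- Let M ∈ SL(n, ℝ) with rows V₁,…,V_n and Iwasawa decomposition M = N·A·K as above, with axions x_{μν} = N_{μν} for μ < ν and dilatons y_μ. Then x_{μν} = y_{ν−1}² · ε(V_μ, V_{ν+1}, …, V_n; V_ν, V_{ν+1}, …, V_n), where ε(A₁,…,A_m; B₁,…,B_m) = δ^{i₁…i_m}_{a₁…a_m} (A₁)^{a₁}⋯(A_m)^{a_m} (B₁)_{i₁}⋯(B_m)_{i_m} is the totally antisymmetrized contraction (equal to the determinant of the m×m matrix of inner products A_i · B_j). -/
import Mathlib

open Matrix Finset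

namespace Stmt13Aux

def idxC (n ν : ℕ) (hν : ν < n) : Fin (n - ν) → Fin n :=
  fun j => ⟨ν + j.1, by have := j.2; omega⟩

def idxR (n ν μ : ℕ) (hν : ν < n) (hμ : μ < n) : Fin (n - ν) → Fin n :=
  fun i => if i.1 = 0 then ⟨μ, hμ⟩ else idxC n ν hν i

lemma sum_restrict (n ν : ℕ) (hν : ν < n) (f : Fin n → ℝ)
    (hf : ∀ k : Fin n, k.1 < ν → f k = 0) :
    ∑ k, f k = ∑ k : Fin (n - ν), f (idxC n ν hν k) := by
  classical
  set F : ℕ → ℝ := fun t => if h : t < n then f ⟨t, h⟩ else 0 with hF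
  have h1 : ∑ k, f k = ∑ k ∈ Finset.range n, F k := by
    rw [← Fin.sum_univ_eq_sum_range]
    exact Finset.sum_congr rfl fun k _ => by simp [hF, k.2]
  have h2 : ∑ k ∈ Finset.Ico 0 ν, F k + ∑ k ∈ Finset.Ico ν n, F k
      = ∑ k ∈ Finset.Ico 0 n, F k :=
    Finset.sum_Ico_consecutive F (Nat.zero_le ν) (le_of_lt hν)
  have h3 : ∑ k ∈ Finset.Ico 0 ν, F k = 0 := by
    apply Finset.sum_eq_zero
    intro k hk
    rw [Finset.mem_Ico] at hk
    have hkn : k < n := lt_trans hk.2 hν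
    simp [hF, hkn, hf ⟨k, hkn⟩ hk.2]
  have h4 : ∑ k ∈ Finset.Ico ν n, F k = ∑ k ∈ Finset.range (n - ν), F (ν + k) :=
    Finset.sum_Ico_eq_sum_range F ν n
  have h5 : ∑ k ∈ Finset.range (n - ν), F (ν + k)
      = ∑ k : Fin (n - ν), F (ν + k.1) :=
    (Fin.sum_univ_eq_sum_range (fun t => F (ν + t)) (n - ν)).symm
  rw [h1, Finset.range_eq_Ico, ← h2, h3, zero_add, h4, h5]
  apply Finset.sum_congr rfl
  intro k _
  have hk : ν + k.1 < n := by have := k.2; omega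
  simp [hF, hk, idxC]

lemma aux_det {m : ℕ} (B : Matrix (Fin (m + 1)) (Fin (m + 1)) ℝ)
    (h0 : ∀ i k : Fin (m + 1), i ≠ 0 → k < i → B i k = 0)
    (hd : ∀ i : Fin (m + 1), i ≠ 0 → B i i = 1) :
    B.det = B 0 0 := by
  rw [Matrix.det_succ_column_zero]
  rw [Finset.sum_eq_single 0]
  · have h1 : (B.submatrix (Fin.succAbove 0) Fin.succ).det = 1 := by
      have hut : (B.submatrix (Fin.succAbove 0) Fin.succ).BlockTriangular id := by
        intro i k hk
        simp only [Matrix.submatrix_apply, Fin.succAbove_zero]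
        exact h0 _ _ (Fin.succ_ne_zero i) (by simpa using hk)
      rw [Matrix.det_of_upperTriangular hut]
      apply Finset.prod_eq_one
      intro i _
      simp only [Matrix.submatrix_apply, Fin.succAbove_zero]
      exact hd _ (Fin.succ_ne_zero i)
    rw [h1]
    simp
  · intro b _ hb
    have : B b 0 = 0 := h0 b 0 hb (Fin.pos_of_ne_zero hb)
    simp [this]
  · intro h
    simp at h

lemma tele (n : ℕ) (y : ℕ → ℝ) (hypos : ∀ i, i ≤ n → 0 < y i) :
    ∀ b a, a + b ≤ n → ∏ k : Fin b, (y (a + k.1 + 1) / y (a + k.1)) = y (a + b) / y a := by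
  intro b
  induction b with
  | zero =>
    intro a ha
    simp only [Finset.univ_eq_empty, Finset.prod_empty, Nat.add_zero]
    exact (div_self (hypos a (by omega)).ne').symm
  | succ b ih =>
    intro a ha
    rw [Fin.prod_univ_castSucc]
    simp only [Fin.coe_castSucc, Fin.val_last]
    rw [ih a (by omega)]
    have h1 : y (a + b) ≠ 0 := (hypos _ (by omega)).ne'
    have h2 : y a ≠ 0 := (hypos _ (by omega)).ne'
    have h3 : a + (b + 1) = a + b + 1 := rfl
    rw [h3]
    field_simp

lemma det_aux (n ν μ : ℕ) (hμν : μ < ν) (hν : ν < n) (hμn : μ < n)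
    (N A : Matrix (Fin n) (Fin n) ℝ)
    (hNd : ∀ i, N i i = 1) (hN0 : ∀ i j : Fin n, j < i → N i j = 0)
    (y : ℕ → ℝ) (hyn : y n = 1) (hypos : ∀ i, i ≤ n → 0 < y i)
    (hAy : ∀ i : Fin n, A i i = y (i.1 + 1) / y i.1)
    (P : Matrix (Fin (n - ν)) (Fin (n - ν)) ℝ)
    (hP : ∀ i j : Fin (n - ν),
        P i j = ∑ k : Fin n,
          N (idxR n ν μ hν hμn i) k * (A k k) ^ 2 * N (idxC n ν hν j) k) :
    P.det = N ⟨μ, hμn⟩ ⟨ν, hν⟩ * (1 / y ν) ^ 2 := by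
  classical
  set B : Matrix (Fin (n - ν)) (Fin (n - ν)) ℝ :=
    Matrix.of fun i k => N (idxR n ν μ hν hμn i) (idxC n ν hν k) with hB
  set d : Fin (n - ν) → ℝ := fun k => (A (idxC n ν hν k) (idxC n ν hν k)) ^ 2 with hd
  set X : Matrix (Fin (n - ν)) (Fin (n - ν)) ℝ :=
    Matrix.of fun k j => N (idxC n ν hν j) (idxC n ν hν k) with hX
  have hPBX : P = B * (Matrix.diagonal d * X) := by
    ext i j
    rw [hP i j]
    rw [sum_restrict n ν hν
      (fun k => N (idxR n ν μ hν hμn i) k * (A k k) ^ 2 * N (idxC n ν hν j) k)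
      (by
        intro k hk
        have hz : N (idxC n ν hν j) k = 0 := by
          apply hN0
          show k.1 < (idxC n ν hν j).1
          simp only [idxC]
          omega
        simp [hz])]
    rw [Matrix.mul_apply]
    simp only [Matrix.diagonal_mul, hB, hd, hX, Matrix.of_apply]
    exact Finset.sum_congr rfl fun k _ => by ring
  rw [hPBX, Matrix.det_mul, Matrix.det_mul, Matrix.det_diagonal]
  have hXdet : X.det = 1 := by
    rw [← Matrix.det_transpose]
    have hut : X.transpose.BlockTriangular id := by
      intro j k hk
      simp only [Matrix.transpose_apply, hX, Matrix.of_apply]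
      apply hN0
      show (idxC n ν hν k).1 < (idxC n ν hν j).1
      simp only [idxC]
      simp only [id] at hk
      omega
    rw [Matrix.det_of_upperTriangular hut]
    apply Finset.prod_eq_one
    intro j _
    simp only [Matrix.transpose_apply, hX, Matrix.of_apply]
    exact hNd _
  have hm : n - ν = (n - ν - 1) + 1 := by omega
  have hBdet : B.det = N ⟨μ, hμn⟩ ⟨ν, hν⟩ := by
    have he := Matrix.det_submatrix_equiv_self (finCongr hm.symm) B
    rw [← he]
    rw [aux_det]
    · show N (idxR n ν μ hν hμn _) (idxC n ν hν _) = _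
      have hR : idxR n ν μ hν hμn ((finCongr hm.symm) 0) = ⟨μ, hμn⟩ := by
        simp [idxR, finCongr_apply]
      have hC : idxC n ν hν ((finCongr hm.symm) 0) = ⟨ν, hν⟩ := by
        apply Fin.ext
        simp [idxC, finCongr_apply]
      rw [hR, hC]
    · intro i k hi hki
      simp only [Matrix.submatrix_apply, hB, Matrix.of_apply, finCongr_apply]
      have hine : i.1 ≠ 0 := by
        intro h
        exact hi (Fin.ext h)
      rw [idxR, if_neg (by simpa using hine)]
      apply hN0
      show (idxC n ν hν _).1 < (idxC n ν hν _).1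
      simp only [idxC, Fin.coe_cast]
      have hklt : k.1 < i.1 := hki
      omega
    · intro i hi
      simp only [Matrix.submatrix_apply, hB, Matrix.of_apply, finCongr_apply]
      have hine : i.1 ≠ 0 := by
        intro h
        exact hi (Fin.ext h)
      rw [idxR, if_neg (by simpa using hine)]
      exact hNd _
  have hprod : ∏ k, d k = (1 / y ν) ^ 2 := by
    have h1 : ∀ k : Fin (n - ν), d k = (y (ν + k.1 + 1) / y (ν + k.1)) ^ 2 := by
      intro k
      simp only [hd, hAy]
      congr 2 <;> simp [idxC]
    calc ∏ k, d k = ∏ k : Fin (n - ν), (y (ν + k.1 + 1) / y (ν + k.1)) ^ 2 :=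
          Finset.prod_congr rfl fun k _ => h1 k
      _ = (∏ k : Fin (n - ν), (y (ν + k.1 + 1) / y (ν + k.1))) ^ 2 := by
          rw [← Finset.prod_pow]
      _ = (y (ν + (n - ν)) / y ν) ^ 2 := by
          rw [tele n y hypos (n - ν) ν (by omega)]
      _ = (1 / y ν) ^ 2 := by
          rw [show ν + (n - ν) = n by omega, hyn]
  rw [hXdet, hBdet, hprod]
  ring

end Stmt13Aux

/-- In the Iwasawa decomposition of `M ∈ SL(n, ℝ)`, the axions are given by
`x_{μν} = y_{ν-1}² · ε(V_μ, V_{ν+1}, …, V_n; V_ν, V_{ν+1}, …, V_n)`, where `ε` is the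
determinant of the matrix of pairwise inner products of the listed rows of `M`. -/
theorem stmt_13 (n : ℕ) (M N A K : Matrix (Fin n) (Fin n) ℝ)
    (hM : M.det = 1) (hdec : M = N * A * K)
    (hNd : ∀ i, N i i = 1) (hN0 : ∀ i j : Fin n, j < i → N i j = 0)
    (y : ℕ → ℝ) (hy0 : y 0 = 1) (hyn : y n = 1) (hypos : ∀ i, i ≤ n → 0 < y i)
    (hA : ∀ i j : Fin n, i ≠ j → A i j = 0)
    (hAy : ∀ i : Fin n, A i i = y (i.1 + 1) / y i.1)
    (hK : K * K.transpose = 1) (hKdet : K.det = 1) :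
    ∀ μ ν : Fin n, μ < ν →
      N μ ν = (y ν.1) ^ 2 *
        (Matrix.of fun i j : Fin (n - ν.1) =>
          ∑ t : Fin n,
            M (if i.1 = 0 then μ else ⟨ν.1 + i.1, by have := i.2; have := ν.2; omega⟩) t *
            M ⟨ν.1 + j.1, by have := j.2; have := ν.2; omega⟩ t).det := by
  classical
  have hMM : M * M.transpose = N * (A * A.transpose) * N.transpose := by
    rw [hdec]
    calc (N * A * K) * (N * A * K).transpose
        = N * (A * ((K * K.transpose) * (A.transpose * N.transpose))) := by
          simp only [Matrix.transpose_mul, Matrix.mul_assoc]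
      _ = N * (A * A.transpose) * N.transpose := by
          rw [hK]
          simp only [Matrix.one_mul, Matrix.mul_assoc]
  have hD : ∀ k l : Fin n, (A * A.transpose) k l = if k = l then (A k k) ^ 2 else 0 := by
    intro k l
    simp only [Matrix.mul_apply, Matrix.transpose_apply]
    by_cases h : k = l
    · subst h
      rw [if_pos rfl, Finset.sum_eq_single k]
      · ring
      · intro b _ hb
        rw [hA k b (Ne.symm hb)]
        ring
      · simp
    · rw [if_neg h]
      apply Finset.sum_eq_zero
      intro t _
      rcases eq_or_ne t k with rfl | ht
      · rw [hA l t (fun hh => h hh.symm)]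
        ring
      · rw [hA k t (Ne.symm ht)]
        ring
  have hND : ∀ r l : Fin n, (N * (A * A.transpose)) r l = N r l * (A l l) ^ 2 := by
    intro r l
    rw [Matrix.mul_apply, Finset.sum_eq_single l]
    · rw [hD l l, if_pos rfl]
    · intro b _ hb
      rw [hD b l, if_neg hb, mul_zero]
    · simp
  have hEntry : ∀ r s : Fin n,
      (∑ t, M r t * M s t) = ∑ k, N r k * (A k k) ^ 2 * N s k := by
    intro r s
    have h1 : (M * M.transpose) r s = ∑ t, M r t * M s t := by
      simp [Matrix.mul_apply, Matrix.transpose_apply]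
    rw [← h1, hMM, Matrix.mul_apply]
    apply Finset.sum_congr rfl
    intro l _
    rw [hND r l, Matrix.transpose_apply]
  intro μ ν hμν
  have hPent : ∀ i j : Fin (n - ν.1),
      (Matrix.of fun i j : Fin (n - ν.1) =>
        ∑ t : Fin n,
          M (if i.1 = 0 then μ else ⟨ν.1 + i.1, by have := i.2; have := ν.2; omega⟩) t *
          M ⟨ν.1 + j.1, by have := j.2; have := ν.2; omega⟩ t) i j
      = ∑ k : Fin n,
          N (Stmt13Aux.idxR n ν.1 μ.1 ν.2 μ.2 i) k * (A k k) ^ 2 *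
            N (Stmt13Aux.idxC n ν.1 ν.2 j) k := by
    intro i j
    exact hEntry _ _
  have key := Stmt13Aux.det_aux n ν.1 μ.1 hμν ν.2 μ.2 N A hNd hN0 y hyn hypos hAy _ hPent
  rw [key]
  have hy : y ν.1 ≠ 0 := (hypos _ (le_of_lt ν.2)).ne'
  show N μ ν = y ν.1 ^ 2 * (N μ ν * (1 / y ν.1) ^ 2)
  field_simp
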